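/- arXiv:1303.3608 — 2 statements merged into one kernel-verified Lean document; each statement's English description precedes it below -/
import Mathlib

section
/- For every integer n ≥ 3, the weighted sum of double zeta values satisfies ∑_{k=2}^{n-1} k·ζ(k, n−k) = ζ(2, n−2) + 2ζ(n) − (n−2)·ζ(n−1, 1). -/
/-- The Riemann zeta value `ζ(s) = ∑_{k ≥ 1} k^{-s}`. -/
noncomputable def zetaR (s : ℕ) : ℝ :=
  ∑' k : {k : ℕ // 1 ≤ k}, ((k.1 : ℝ) ^ s)⁻¹

/-- The double zeta value `ζ(s₁, s₂) = ∑_{k₁ > k₂ ≥ 1} k₁^{-s₁} k₂^{-s₂}`. -/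
noncomputable def mzv2 (s₁ s₂ : ℕ) : ℝ :=
  ∑' p : {p : ℕ × ℕ // 1 ≤ p.2 ∧ p.2 < p.1},
    ((p.1.1 : ℝ) ^ s₁ * (p.1.2 : ℝ) ^ s₂)⁻¹

/-- The triple zeta value `ζ(s₁, s₂, s₃) = ∑_{k₁ > k₂ > k₃ ≥ 1} k₁^{-s₁} k₂^{-s₂} k₃^{-s₃}`. -/
noncomputable def mzv3 (s₁ s₂ s₃ : ℕ) : ℝ :=
  ∑' p : {p : ℕ × ℕ × ℕ // 1 ≤ p.2.2 ∧ p.2.2 < p.2.1 ∧ p.2.1 < p.1},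
    ((p.1.1 : ℝ) ^ s₁ * (p.1.2.1 : ℝ) ^ s₂ * (p.1.2.2 : ℝ) ^ s₃)⁻¹

/-- The quadruple zeta value `ζ(s₁, s₂, s₃, s₄)`. -/
noncomputable def mzv4 (s₁ s₂ s₃ s₄ : ℕ) : ℝ :=
  ∑' p : {p : ℕ × ℕ × ℕ × ℕ //
      1 ≤ p.2.2.2 ∧ p.2.2.2 < p.2.2.1 ∧ p.2.2.1 < p.2.1 ∧ p.2.1 < p.1},
    ((p.1.1 : ℝ) ^ s₁ * (p.1.2.1 : ℝ) ^ s₂ * (p.1.2.2.1 : ℝ) ^ s₃ * (p.1.2.2.2 : ℝ) ^ s₄)⁻¹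

/-- Terms of the generating series `G₁`. -/
noncomputable def g1term (x : ℝ) (s : ℕ) : ℝ := x ^ (s + 1) * zetaR (s + 2)

/-- `G₁(x) = ∑_{s ≥ 2} x^{s-1} ζ(s)`. -/
noncomputable def G1f (x : ℝ) : ℝ := ∑' s : ℕ, g1term x s

/-- Terms of the generating series `G₂`. -/
noncomputable def g2term (x₁ x₂ : ℝ) (p : ℕ × ℕ) : ℝ :=
  x₁ ^ (p.1 + 1) * x₂ ^ p.2 * mzv2 (p.1 + 2) (p.2 + 1)

/-- `G₂(x₁, x₂) = ∑_{s₁ ≥ 2, s₂ ≥ 1} x₁^{s₁-1} x₂^{s₂-1} ζ(s₁, s₂)`. -/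
noncomputable def G2f (x₁ x₂ : ℝ) : ℝ := ∑' p : ℕ × ℕ, g2term x₁ x₂ p

/-- Terms of the generating series `G₃`. -/
noncomputable def g3term (x₁ x₂ x₃ : ℝ) (p : ℕ × ℕ × ℕ) : ℝ :=
  x₁ ^ (p.1 + 1) * x₂ ^ p.2.1 * x₃ ^ p.2.2 * mzv3 (p.1 + 2) (p.2.1 + 1) (p.2.2 + 1)

/-- `G₃(x₁, x₂, x₃) = ∑_{s₁ ≥ 2, s₂, s₃ ≥ 1} x₁^{s₁-1} x₂^{s₂-1} x₃^{s₃-1} ζ(s₁, s₂, s₃)`. -/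
noncomputable def G3f (x₁ x₂ x₃ : ℝ) : ℝ := ∑' p : ℕ × ℕ × ℕ, g3term x₁ x₂ x₃ p

open Finset Filter Topology
open scoped NNReal ENNReal

/-!
Put `n = m + 2`, and write `a > b ≥ 1` for the summation variables of `ζ(s₁, s₂)` and
`c = a - b`. Exchanging `b` and `c` in `ζ(m + 1, 1)`, every pair `(b, c)` contributes the
partial-fraction identity
`∑_{k=2}^{m+1} k / (a^k b^(m+2-k)) + m / (c a^(m+1)) = (1/(ca) + 1/c²) (b^(-m) - a^(-m))`.
Summed over `b`, the difference `b^(-m) - (b+c)^(-m)` telescopes to `∑_{l ≤ c} l^(-m)`, so the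
`1/c²` part gives `ζ(2, m) + ζ(m + 2)`. The `1/(ca)` part gives `ζ(m + 2)`: evaluate
`∑ 1/(c a b^m)` once through `1/(ca) = (1/b)(1/c - 1/a)` (again a telescoping difference) and
once through `b^(-m) = a^(-m) + (b^(-m) - a^(-m))`, and cancel `ζ(m + 1, 1)`.
All rearrangements take place in `ℝ≥0∞`; finiteness, from `ζ(2, 1) ≤ ζ(2)`, is only needed for
that cancellation and for the return to `ℝ`.
-/

lemma sum_Icc_mul_inv_pow_add {K : Type*} [Field K] {b c : K} (hb : b ≠ 0) (hc : c ≠ 0)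
    (hbc : b + c ≠ 0) (m : ℕ) :
    ∑ k ∈ Icc 2 (m + 1), (k : K) * (((b + c) ^ k)⁻¹ * (b ^ (m + 2 - k))⁻¹)
        + m * (((b + c) ^ (m + 1))⁻¹ * c⁻¹)
      = (c⁻¹ * (b + c)⁻¹ + (c ^ 2)⁻¹) * ((b ^ m)⁻¹ - ((b + c) ^ m)⁻¹) := by
  induction m with
  | zero => simp
  | succ m ih =>
    have hshift : ∑ k ∈ Icc 2 (m + 1), (k : K) * (((b + c) ^ k)⁻¹ * (b ^ (m + 1 + 2 - k))⁻¹)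
        = b⁻¹ * ∑ k ∈ Icc 2 (m + 1), (k : K) * (((b + c) ^ k)⁻¹ * (b ^ (m + 2 - k))⁻¹) := by
      rw [mul_sum]
      refine sum_congr rfl fun k hk => ?_
      rw [show m + 1 + 2 - k = m + 2 - k + 1 by grind, pow_succ]
      field_simp
    rw [sum_Icc_succ_top (by omega), hshift, eq_sub_of_add_eq ih,
      show m + 1 + 2 - (m + 1 + 1) = 1 by omega]
    push_cast
    field_simp
    ring

lemma tsum_sub_add_eq_sum_range {g : ℕ → ℝ≥0} (hg : Antitone g)
    (hg0 : Tendsto g atTop (𝓝 0)) (k : ℕ) :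
    ∑' i, ((g i - g (i + k) : ℝ≥0) : ℝ≥0∞) = ∑ i ∈ range k, (g i : ℝ≥0∞) := by
  rw [← ENNReal.ofNNReal_finsetSum]
  refine ENNReal.tsum_coe_eq (NNReal.hasSum_coe.1 ?_)
  have hpartial : ∀ N, ∑ i ∈ range N, ((g i - g (i + k) : ℝ≥0) : ℝ)
      = ∑ i ∈ range k, (g i : ℝ) - ∑ i ∈ range k, (g (N + i) : ℝ) := fun N => by
    have h₁ := sum_range_add (fun i => (g i : ℝ)) N k
    have h₂ : ∑ i ∈ range (N + k), (g i : ℝ)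
        = ∑ i ∈ range k, (g i : ℝ) + ∑ i ∈ range N, (g (i + k) : ℝ) := by
      rw [add_comm N k, sum_range_add]
      simp only [add_comm k]
    rw [sum_congr rfl fun i _ => NNReal.coe_sub (hg (Nat.le_add_right i k)), sum_sub_distrib]
    linarith
  rw [hasSum_iff_tendsto_nat_of_nonneg (fun i => NNReal.coe_nonneg _), NNReal.coe_sum]
  simp only [hpartial]
  have htail : Tendsto (fun N => ∑ i ∈ range k, (g (N + i) : ℝ)) atTop (𝓝 0) := by
    simpa using tendsto_finsetSum (range k) fun i _ =>
      (NNReal.tendsto_coe.2 hg0).comp (tendsto_atTop_mono (Nat.le_add_right · i) tendsto_id)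
  simpa using tendsto_const_nhds.sub htail

lemma tsum_sum_range_eq_tsum_tsum (F : ℕ → ℕ → ℝ≥0∞) :
    ∑' i, ∑ l ∈ range i, F i l = ∑' l, ∑' j, F (l + j + 1) l := by
  have hite : ∀ i, ∑ l ∈ range i, F i l = ∑' l, if l < i then F i l else 0 := fun i => by
    rw [tsum_eq_sum (s := range i) fun l hl => if_neg (by simpa using hl)]
    exact sum_congr rfl fun l hl => (if_pos (mem_range.1 hl)).symm
  simp_rw [hite]
  rw [ENNReal.tsum_comm]
  refine tsum_congr fun l => ?_
  rw [← ENNReal.summable.sum_add_tsum_nat_add' (k := l + 1),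
    sum_eq_zero fun i hi => if_neg (by simpa [Nat.lt_succ_iff] using hi), zero_add]
  exact tsum_congr fun j => by rw [if_pos (by omega), show j + (l + 1) = l + j + 1 by omega]

/-- A pair of summation indices `(l, j)` below stands for `b = l + 1`, `c = j + 1`,
`a = b + c = l + j + 2`. -/
noncomputable def invSuccPow (s i : ℕ) : ℝ≥0 := ((i + 1 : ℝ≥0) ^ s)⁻¹

lemma coe_invSuccPow (s i : ℕ) : (invSuccPow s i : ℝ) = (((i : ℝ) + 1) ^ s)⁻¹ := by
  simp [invSuccPow]

lemma invSuccPow_mul_invSuccPow (s t i : ℕ) :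
    invSuccPow s i * invSuccPow t i = invSuccPow (s + t) i := by
  simp only [invSuccPow, pow_add, mul_inv]

lemma invSuccPow_antitone (s : ℕ) : Antitone (invSuccPow s) := fun i j hij => by
  unfold invSuccPow
  gcongr

lemma invSuccPow_le_invSuccPow_of_le {s s' : ℕ} (h : s ≤ s') (i : ℕ) :
    invSuccPow s' i ≤ invSuccPow s i := by
  unfold invSuccPow
  gcongr
  exact le_add_self

lemma tendsto_invSuccPow {s : ℕ} (hs : s ≠ 0) : Tendsto (invSuccPow s) atTop (𝓝 0) := by
  rw [← NNReal.tendsto_coe, funext (coe_invSuccPow s)]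
  exact tendsto_inv_atTop_zero.comp ((tendsto_pow_atTop hs).comp
    (tendsto_atTop_add_const_right _ 1 tendsto_natCast_atTop_atTop))

lemma invSuccPow_one_mul_invSuccPow_one (l j : ℕ) :
    invSuccPow 1 j * invSuccPow 1 (l + j + 1)
      = invSuccPow 1 l * (invSuccPow 1 j - invSuccPow 1 (j + (l + 1))) := by
  apply NNReal.coe_injective
  rw [NNReal.coe_mul, NNReal.coe_mul, NNReal.coe_sub (invSuccPow_antitone 1 (by omega))]
  simp only [coe_invSuccPow, Nat.cast_add, Nat.cast_one, pow_one]
  field_simp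
  ring

lemma invSuccPow_two_succ_le_sub (x : ℕ) :
    invSuccPow 2 (x + 1) ≤ invSuccPow 1 x - invSuccPow 1 (x + 1) := by
  rw [← NNReal.coe_le_coe, NNReal.coe_sub (invSuccPow_antitone 1 (by omega))]
  simp only [coe_invSuccPow, Nat.cast_add, Nat.cast_one, pow_one]
  rw [inv_sub_inv (by positivity) (by positivity), add_sub_cancel_left, one_div]
  exact inv_anti₀ (by positivity) (by nlinarith)

lemma weighted_sum_invSuccPow (m l j : ℕ) :
    ∑ k ∈ Icc 2 (m + 1), (k : ℝ≥0) * (invSuccPow k (l + j + 1) * invSuccPow (m + 2 - k) l)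
        + m * (invSuccPow (m + 1) (l + j + 1) * invSuccPow 1 j)
      = (invSuccPow 1 j * invSuccPow 1 (l + j + 1) + invSuccPow 2 j)
          * (invSuccPow m l - invSuccPow m (l + j + 1)) := by
  apply NNReal.coe_injective
  have hbc : ((l + j + 1 : ℕ) : ℝ) + 1 = ((l : ℝ) + 1) + ((j : ℝ) + 1) := by push_cast; ring
  simp only [NNReal.coe_add, NNReal.coe_mul, NNReal.coe_sum, NNReal.coe_natCast,
    NNReal.coe_sub (invSuccPow_antitone m (by omega : l ≤ l + j + 1)), coe_invSuccPow, hbc, pow_one]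
  exact sum_Icc_mul_inv_pow_add (by positivity) (by positivity) (by positivity) m

noncomputable def zetaENN (s : ℕ) : ℝ≥0∞ := ∑' i, (invSuccPow s i : ℝ≥0∞)

noncomputable def mzv2ENN (s t : ℕ) : ℝ≥0∞ :=
  ∑' i, ∑ l ∈ range i, (invSuccPow s i * invSuccPow t l : ℝ≥0∞)

lemma mzv2ENN_eq_tsum_tsum (s t : ℕ) :
    mzv2ENN s t = ∑' l, ∑' j, (invSuccPow s (l + j + 1) * invSuccPow t l : ℝ≥0∞) :=
  tsum_sum_range_eq_tsum_tsum _

lemma mzv2ENN_eq_tsum_tsum' (s t : ℕ) :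
    mzv2ENN s t = ∑' l, ∑' j, (invSuccPow s (l + j + 1) * invSuccPow t j : ℝ≥0∞) := by
  rw [mzv2ENN_eq_tsum_tsum, ENNReal.tsum_comm]
  exact tsum_congr fun l => tsum_congr fun j => by rw [Nat.add_comm j l]

lemma tsum_invSuccPow_mul_sum_range_succ (s t : ℕ) :
    ∑' i, (invSuccPow s i : ℝ≥0∞) * ∑ l ∈ range (i + 1), (invSuccPow t l : ℝ≥0∞)
      = mzv2ENN s t + zetaENN (s + t) := by
  simp_rw [sum_range_succ, mul_add, mul_sum, ← ENNReal.coe_mul, invSuccPow_mul_invSuccPow]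
  rw [ENNReal.tsum_add, mzv2ENN, zetaENN]
  simp_rw [ENNReal.coe_mul]

lemma tsum_invSuccPow_mul_tsum_sub (s : ℕ) {t : ℕ} (ht : t ≠ 0) :
    ∑' j, (invSuccPow s j : ℝ≥0∞)
        * ∑' l, ((invSuccPow t l - invSuccPow t (l + (j + 1)) : ℝ≥0) : ℝ≥0∞)
      = mzv2ENN s t + zetaENN (s + t) := by
  simp_rw [tsum_sub_add_eq_sum_range (invSuccPow_antitone t) (tendsto_invSuccPow ht)]
  exact tsum_invSuccPow_mul_sum_range_succ s t

lemma tsum_tsum_invSuccPow_two_mul_sub {m : ℕ} (hm : m ≠ 0) :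
    ∑' l, ∑' j, ((invSuccPow 2 j * (invSuccPow m l - invSuccPow m (l + j + 1)) : ℝ≥0) : ℝ≥0∞)
      = mzv2ENN 2 m + zetaENN (m + 2) := by
  rw [ENNReal.tsum_comm, add_comm m, ← tsum_invSuccPow_mul_tsum_sub 2 hm]
  simp_rw [ENNReal.coe_mul, ENNReal.tsum_mul_left, ← add_assoc]

lemma tsum_tsum_invSuccPow_one_mul_sub {m : ℕ} (hfin : mzv2ENN (m + 1) 1 ≠ ⊤) :
    ∑' l, ∑' j, ((invSuccPow 1 j * invSuccPow 1 (l + j + 1)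
        * (invSuccPow m l - invSuccPow m (l + j + 1)) : ℝ≥0) : ℝ≥0∞)
      = zetaENN (m + 2) := by
  have hfrac : ∑' l, ∑' j,
      ((invSuccPow 1 j * invSuccPow 1 (l + j + 1) * invSuccPow m l : ℝ≥0) : ℝ≥0∞)
        = mzv2ENN (m + 1) 1 + zetaENN (m + 2) := by
    rw [show m + 2 = m + 1 + 1 from rfl, ← tsum_invSuccPow_mul_tsum_sub (m + 1) one_ne_zero]
    refine tsum_congr fun l => ?_
    rw [← ENNReal.tsum_mul_left]
    refine tsum_congr fun j => ?_
    rw [← ENNReal.coe_mul, invSuccPow_one_mul_invSuccPow_one, mul_right_comm,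
      invSuccPow_mul_invSuccPow, add_comm 1 m]
  have hsplit : ∑' l, ∑' j,
      ((invSuccPow 1 j * invSuccPow 1 (l + j + 1) * invSuccPow m l : ℝ≥0) : ℝ≥0∞)
        = mzv2ENN (m + 1) 1 + ∑' l, ∑' j, ((invSuccPow 1 j * invSuccPow 1 (l + j + 1)
          * (invSuccPow m l - invSuccPow m (l + j + 1)) : ℝ≥0) : ℝ≥0∞) := by
    rw [mzv2ENN_eq_tsum_tsum', ← ENNReal.tsum_add]
    refine tsum_congr fun l => ?_
    rw [← ENNReal.tsum_add]
    refine tsum_congr fun j => ?_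
    rw [← ENNReal.coe_mul, ← ENNReal.coe_add, ← invSuccPow_mul_invSuccPow]
    congr 1
    conv_lhs => rw [← add_tsub_cancel_of_le (invSuccPow_antitone m (by omega : l ≤ l + j + 1))]
    ring
  exact (ENNReal.add_right_inj hfin).1 (hsplit.symm.trans hfrac)

theorem weighted_sum_mzv2ENN {m : ℕ} (hm : m ≠ 0) (hfin : mzv2ENN (m + 1) 1 ≠ ⊤) :
    ∑ k ∈ Icc 2 (m + 1), (k : ℝ≥0∞) * mzv2ENN k (m + 2 - k) + m * mzv2ENN (m + 1) 1
      = mzv2ENN 2 m + 2 * zetaENN (m + 2) := by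
  have hpair : ∑ k ∈ Icc 2 (m + 1), (k : ℝ≥0∞) * mzv2ENN k (m + 2 - k) + m * mzv2ENN (m + 1) 1
      = ∑' l, ∑' j, (((invSuccPow 1 j * invSuccPow 1 (l + j + 1) + invSuccPow 2 j)
          * (invSuccPow m l - invSuccPow m (l + j + 1)) : ℝ≥0) : ℝ≥0∞) := by
    simp_rw [← weighted_sum_invSuccPow]
    rw [mzv2ENN_eq_tsum_tsum' (m + 1) 1]
    simp only [mzv2ENN_eq_tsum_tsum, ENNReal.coe_add, ENNReal.coe_mul, ENNReal.ofNNReal_finsetSum,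
      ENNReal.coe_natCast, ENNReal.tsum_add, ENNReal.tsum_mul_left,
      Summable.tsum_finsetSum fun _ _ => ENNReal.summable]
  rw [hpair]
  simp_rw [add_mul, ENNReal.coe_add, ENNReal.tsum_add]
  rw [tsum_tsum_invSuccPow_one_mul_sub hfin, tsum_tsum_invSuccPow_two_mul_sub hm]
  ring

lemma zetaENN_ne_top {s : ℕ} (hs : 2 ≤ s) : zetaENN s ≠ ⊤ := by
  rw [zetaENN, ENNReal.tsum_coe_ne_top_iff_summable, ← NNReal.summable_coe,
    funext (coe_invSuccPow s)]
  exact_mod_cast (summable_nat_add_iff 1).2 (Real.summable_nat_pow_inv.2 hs)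

lemma mzv2ENN_le_mzv2ENN_two_one {s t : ℕ} (hs : 2 ≤ s) (ht : 1 ≤ t) :
    mzv2ENN s t ≤ mzv2ENN 2 1 :=
  ENNReal.tsum_le_tsum fun i => sum_le_sum fun l _ => by
    gcongr
    · exact invSuccPow_le_invSuccPow_of_le hs i
    · exact invSuccPow_le_invSuccPow_of_le ht l

lemma mzv2ENN_two_one_le_zetaENN_two : mzv2ENN 2 1 ≤ zetaENN 2 := by
  rw [mzv2ENN_eq_tsum_tsum, zetaENN]
  refine ENNReal.tsum_le_tsum fun l => ?_
  have hg : Antitone fun j => invSuccPow 1 (l + j) :=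
    (invSuccPow_antitone 1).comp_monotone fun _ _ h => Nat.add_le_add_left h l
  have hg0 : Tendsto (fun j => invSuccPow 1 (l + j)) atTop (𝓝 0) :=
    (tendsto_invSuccPow one_ne_zero).comp (tendsto_atTop_mono (Nat.le_add_left · l) tendsto_id)
  calc ∑' j, (invSuccPow 2 (l + j + 1) * invSuccPow 1 l : ℝ≥0∞)
      ≤ ∑' j, ((invSuccPow 1 (l + j) - invSuccPow 1 (l + (j + 1)) : ℝ≥0) : ℝ≥0∞)
          * invSuccPow 1 l :=
        ENNReal.tsum_le_tsum fun j => by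
          gcongr
          exact invSuccPow_two_succ_le_sub (l + j)
    _ = invSuccPow 2 l := by
        rw [ENNReal.tsum_mul_right, tsum_sub_add_eq_sum_range hg hg0 1, sum_range_one,
          ← ENNReal.coe_mul, add_zero, invSuccPow_mul_invSuccPow]

lemma mzv2ENN_ne_top {s t : ℕ} (hs : 2 ≤ s) (ht : 1 ≤ t) : mzv2ENN s t ≠ ⊤ :=
  ne_top_of_le_ne_top (zetaENN_ne_top le_rfl)
    ((mzv2ENN_le_mzv2ENN_two_one hs ht).trans mzv2ENN_two_one_le_zetaENN_two)

def natEquivPos : ℕ ≃ {k : ℕ // 1 ≤ k} where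
  toFun i := ⟨i + 1, Nat.le_add_left 1 i⟩
  invFun k := k.1 - 1
  left_inv i := Nat.add_sub_cancel i 1
  right_inv k := Subtype.ext (Nat.sub_add_cancel k.2)

def natPairEquiv : ℕ × ℕ ≃ {p : ℕ × ℕ // 1 ≤ p.2 ∧ p.2 < p.1} where
  toFun p := ⟨(p.1 + p.2 + 2, p.1 + 1), by omega⟩
  invFun q := (q.1.2 - 1, q.1.1 - q.1.2 - 1)
  left_inv p := by ext <;> simp only <;> omega
  right_inv q := by ext <;> simp only <;> omega

lemma zetaR_eq_toReal (s : ℕ) : zetaR s = (zetaENN s).toReal := by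
  rw [zetaENN, ENNReal.tsum_toReal_eq fun _ => ENNReal.coe_ne_top, zetaR,
    ← natEquivPos.tsum_eq]
  refine tsum_congr fun i => ?_
  simp [natEquivPos, coe_invSuccPow]

lemma mzv2_eq_toReal (s t : ℕ) : mzv2 s t = (mzv2ENN s t).toReal := by
  rw [mzv2ENN_eq_tsum_tsum, ← ENNReal.tsum_prod,
    ENNReal.tsum_toReal_eq fun _ => ENNReal.mul_ne_top ENNReal.coe_ne_top ENNReal.coe_ne_top,
    mzv2, ← natPairEquiv.tsum_eq]
  refine tsum_congr fun p => ?_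
  simp only [natPairEquiv, Equiv.coe_fn_mk, Nat.cast_add, Nat.cast_ofNat, Nat.cast_one,
    mul_inv_rev, ENNReal.toReal_mul, ENNReal.coe_toReal, coe_invSuccPow]
  ring

/-- For every integer `n ≥ 3`,
`∑_{k=2}^{n-1} k ζ(k, n-k) = ζ(2, n-2) + 2 ζ(n) - (n-2) ζ(n-1, 1)`. -/
theorem weighted_sum_k (n : ℕ) (hn : 3 ≤ n) :
    ∑ k ∈ Finset.Icc 2 (n - 1), (k : ℝ) * mzv2 k (n - k)
      = mzv2 2 (n - 2) + 2 * zetaR n - ((n : ℝ) - 2) * mzv2 (n - 1) 1 := by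
  obtain ⟨m, rfl⟩ : ∃ m, n = m + 2 := ⟨n - 2, by omega⟩
  have hk : ∀ k ∈ Icc 2 (m + 1), (k : ℝ≥0∞) * mzv2ENN k (m + 2 - k) ≠ ⊤ := fun k hmem =>
    ENNReal.mul_ne_top (ENNReal.natCast_ne_top k)
      (mzv2ENN_ne_top (mem_Icc.1 hmem).1 (by have := mem_Icc.1 hmem; omega))
  have h₁ : mzv2ENN (m + 1) 1 ≠ ⊤ := mzv2ENN_ne_top (by omega) le_rfl
  have h₂ : mzv2ENN 2 m ≠ ⊤ := mzv2ENN_ne_top le_rfl (by omega)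
  have h₃ : zetaENN (m + 2) ≠ ⊤ := zetaENN_ne_top (by omega)
  have key := congrArg ENNReal.toReal (weighted_sum_mzv2ENN (by omega) h₁)
  rw [ENNReal.toReal_add (ENNReal.sum_ne_top.2 hk) (by finiteness),
    ENNReal.toReal_add h₂ (by finiteness), ENNReal.toReal_sum hk] at key
  simp only [ENNReal.toReal_mul, ENNReal.toReal_natCast, ENNReal.toReal_ofNat, ← mzv2_eq_toReal,
    ← zetaR_eq_toReal] at key
  rw [show m + 2 - 1 = m + 1 by omega, show m + 2 - 2 = m by omega, Nat.cast_add, Nat.cast_two,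
    add_sub_cancel_right]
  linarith
end

section
/- For every integer n ≥ 4, the weighted sum of double zeta values satisfies ∑_{k=2}^{n-1} k²·ζ(k, n−k) = 3ζ(2, n−2) + 2ζ(3, n−3) + 6ζ(n) − (2n−6)·ζ(n−2, 2) − n(n−2)·ζ(n−1, 1). -/
/-!
The Tornheim sums `T(p, q; r) = ∑_{a, b ≥ 1} a⁻ᵖ b⁻ᵠ (a + b)⁻ʳ` satisfy
`T(p+1, q+1; r) = T(p, q+1; r+1) + T(p+1, q; r+1)` (as `(a + b) / (a b) = 1/a + 1/b`) and
`T(0, q; r) = ζ(r, q)`, so by induction every convergent `T(a+1, b+1; r)` is the binomial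
combination `∑_j (C(j, a) + C(j, b)) ζ(r+1+j, a+b+1-j)` of double zeta values.
At `r = 0` the Tornheim sum is `ζ(p) ζ(q) = ζ(p, q) + ζ(q, p) + ζ(p + q)`, and the telescoping
evaluation `T(1, q; 1) = ζ(q+1, 1) + ζ(q+2)` gives Euler's sum formula `∑_k ζ(k, n-k) = ζ(n)`.
Writing `k² = 2 C(k-1, 2) + 3 (k-1) + 1`, the weighted sum is read off from `T(3, n-3; 0)`,
`T(2, n-2; 0)` and Euler's formula. For `n = 4`, where `T(3, 1; 0)` diverges, one uses
`ζ(3, 1) = ζ(4)/4` instead.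
-/

open Finset Filter Topology

/-- The term `a⁻ᵖ b⁻ᵠ (a + b)⁻ʳ` of the Tornheim sum `T(p, q; r)`, at `(a - 1, b - 1) ∈ ℕ × ℕ`. -/
noncomputable def tornheimTerm (p q r : ℕ) (x : ℕ × ℕ) : ℝ :=
  (((x.1 : ℝ) + 1) ^ p * ((x.2 : ℝ) + 1) ^ q * ((x.1 : ℝ) + x.2 + 2) ^ r)⁻¹

noncomputable def tornheim (p q r : ℕ) : ℝ := ∑' x, tornheimTerm p q r x

lemma tornheimTerm_swap (p q r : ℕ) (x : ℕ × ℕ) :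
    tornheimTerm q p r x.swap = tornheimTerm p q r x := by
  simp only [tornheimTerm, Prod.fst_swap, Prod.snd_swap]
  ring

lemma tornheim_comm (p q r : ℕ) : tornheim p q r = tornheim q p r := by
  rw [tornheim, tornheim, ← (Equiv.prodComm ℕ ℕ).tsum_eq]
  exact tsum_congr (tornheimTerm_swap q p r)

lemma tornheimTerm_anti {p q r p' q' r' : ℕ} (hp : p ≤ p') (hq : q ≤ q') (hr : r ≤ r')
    (x : ℕ × ℕ) : tornheimTerm p' q' r' x ≤ tornheimTerm p q r x := by
  unfold tornheimTerm
  have ha : (1 : ℝ) ≤ (x.1 : ℝ) + 1 := by simp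
  have hb : (1 : ℝ) ≤ (x.2 : ℝ) + 1 := by simp
  have hab : (1 : ℝ) ≤ (x.1 : ℝ) + x.2 + 2 := by linarith
  gcongr

lemma summable_inv_mul_sqrt :
    Summable fun k : ℕ => (((k : ℝ) + 1) * √((k : ℝ) + 1))⁻¹ := by
  refine ((summable_nat_add_iff 1).2
    (Real.summable_nat_rpow_inv.2 (by norm_num : (1 : ℝ) < 3 / 2))).congr fun k => ?_
  have hk : (0 : ℝ) < (k : ℝ) + 1 := by positivity
  rw [Real.sqrt_eq_rpow, ← Real.rpow_one_add' hk.le (by norm_num)]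
  push_cast
  norm_num

lemma summable_tornheimTerm {p q r : ℕ} (hr : 1 ≤ r) (hp : 2 ≤ p + r) (hq : 2 ≤ q + r)
    (hpq : 3 ≤ p + q + r) : Summable (tornheimTerm p q r) := by
  wlog hle : p ≤ q generalizing p q
  · exact ((Equiv.prodComm ℕ ℕ).summable_iff.2 (this hq hp (by omega) (by omega))).congr
      (tornheimTerm_swap p q r)
  have hmaj : Summable fun x : ℕ × ℕ =>
      (((x.1 : ℝ) + 1) * √((x.1 : ℝ) + 1))⁻¹ * (((x.2 : ℝ) + 1) * √((x.2 : ℝ) + 1))⁻¹ :=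
    summable_inv_mul_sqrt.mul_of_nonneg summable_inv_mul_sqrt (fun _ => by positivity)
      fun _ => by positivity
  refine .of_nonneg_of_le (fun x => by unfold tornheimTerm; positivity) (fun x => ?_) hmaj
  set A : ℝ := (x.1 : ℝ) + 1
  set B : ℝ := (x.2 : ℝ) + 1
  have hA : 1 ≤ A := by simp [A]
  have hB : 1 ≤ B := by simp [B]
  have hAB : (x.1 : ℝ) + x.2 + 2 = A + B := by simp only [A, B]; ring
  have hs : √A * √B ≤ A + B := by
    nlinarith [sq_nonneg (√A - √B), Real.sq_sqrt (by linarith : 0 ≤ A),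
      Real.sq_sqrt (by linarith : 0 ≤ B)]
  -- every admissible `(p, q, r)` with `p ≤ q` dominates `(1, 1, 1)`, `(0, 1, 2)` or `(0, 0, 3)`
  have h₁ : A * √A * (B * √B) ≤ A * B * (A + B) := by
    nlinarith [mul_le_mul_of_nonneg_left hs (by positivity : 0 ≤ A * B)]
  have h₂ : A * B * (A + B) ≤ B * (A + B) ^ 2 := by
    nlinarith [mul_le_mul_of_nonneg_left (by linarith : A ≤ A + B)
      (by positivity : 0 ≤ B * (A + B))]
  have h₃ : B * (A + B) ^ 2 ≤ (A + B) ^ 3 := by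
    nlinarith [mul_le_mul_of_nonneg_left (by linarith : B ≤ A + B)
      (by positivity : 0 ≤ (A + B) ^ 2)]
  rw [← mul_inv]
  rcases Nat.eq_zero_or_pos p with rfl | hp0
  · rcases Nat.eq_zero_or_pos q with rfl | hq0
    · refine (tornheimTerm_anti le_rfl le_rfl (by omega : 3 ≤ r) x).trans ?_
      rw [tornheimTerm, hAB]
      exact inv_anti₀ (by positivity) (by simpa using h₁.trans (h₂.trans h₃))
    · refine (tornheimTerm_anti le_rfl hq0 (by omega : 2 ≤ r) x).trans ?_
      rw [tornheimTerm, hAB]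
      exact inv_anti₀ (by positivity) (by simpa using h₁.trans h₂)
  · refine (tornheimTerm_anti hp0 (by omega : 1 ≤ q) hr x).trans ?_
    rw [tornheimTerm, hAB]
    exact inv_anti₀ (by positivity) (by simpa using h₁)

lemma tornheimTerm_succ_succ (p q r : ℕ) (x : ℕ × ℕ) :
    tornheimTerm (p + 1) (q + 1) r x =
      tornheimTerm p (q + 1) (r + 1) x + tornheimTerm (p + 1) q (r + 1) x := by
  unfold tornheimTerm
  have : (0 : ℝ) < (x.1 : ℝ) + 1 := by positivity
  have : (0 : ℝ) < (x.2 : ℝ) + 1 := by positivity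
  have : (0 : ℝ) < (x.1 : ℝ) + x.2 + 2 := by positivity
  field_simp
  ring

lemma tornheim_succ_succ {p q r : ℕ} (hp : 1 ≤ p + r) (hq : 1 ≤ q + r) :
    tornheim (p + 1) (q + 1) r = tornheim p (q + 1) (r + 1) + tornheim (p + 1) q (r + 1) := by
  rw [tornheim, tornheim, tornheim, ← Summable.tsum_add
    (summable_tornheimTerm (by omega) (by omega) (by omega) (by omega))
    (summable_tornheimTerm (by omega) (by omega) (by omega) (by omega))]
  exact tsum_congr (tornheimTerm_succ_succ p q r)

def ltPairEquiv : ℕ × ℕ ≃ {k : ℕ × ℕ // 1 ≤ k.2 ∧ k.2 < k.1} where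
  toFun x := ⟨(x.1 + x.2 + 2, x.2 + 1), by omega⟩
  invFun k := (k.1.1 - k.1.2 - 1, k.1.2 - 1)
  left_inv x := by ext <;> simp; omega
  right_inv k := by ext <;> simp <;> omega

lemma mzv2_term_ltPairEquiv (s t : ℕ) (x : ℕ × ℕ) :
    (((ltPairEquiv x).1.1 : ℝ) ^ s * ((ltPairEquiv x).1.2 : ℝ) ^ t)⁻¹ = tornheimTerm 0 t s x := by
  simp only [ltPairEquiv, Equiv.coe_fn_mk, tornheimTerm]
  push_cast
  ring

lemma tornheim_zero_left (q r : ℕ) : tornheim 0 q r = mzv2 r q := by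
  rw [mzv2, ← ltPairEquiv.tsum_eq]
  exact tsum_congr fun x => (mzv2_term_ltPairEquiv r q x).symm

lemma tornheim_zero_right (p r : ℕ) : tornheim p 0 r = mzv2 r p := by
  rw [tornheim_comm, tornheim_zero_left]

lemma summable_mzv2_term {s t : ℕ} (hs : 2 ≤ s) (ht : 1 ≤ t) :
    Summable fun k : {k : ℕ × ℕ // 1 ≤ k.2 ∧ k.2 < k.1} =>
      ((k.1.1 : ℝ) ^ s * (k.1.2 : ℝ) ^ t)⁻¹ := by
  rw [← ltPairEquiv.summable_iff]
  exact (summable_tornheimTerm (by omega) (by omega) (by omega) (by omega)).congr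
    fun x => (mzv2_term_ltPairEquiv s t x).symm

lemma hasSum_zetaR {s : ℕ} (hs : 2 ≤ s) :
    HasSum (fun k : ℕ => (((k : ℝ) + 1) ^ s)⁻¹) (zetaR s) := by
  have h : Summable fun k : ℕ => (((k : ℝ) + 1) ^ s)⁻¹ :=
    ((summable_nat_add_iff 1).2 (Real.summable_nat_pow_inv.2 hs)).congr fun k => by push_cast; rfl
  convert h.hasSum using 1
  exact (tsum_pnat_eq_tsum_succ (f := fun k : ℕ => ((k : ℝ) ^ s)⁻¹)).trans (by push_cast; rfl)

def sigmaFinEquivLtPair : (Σ c : ℕ, Fin c) ≃ {k : ℕ × ℕ // 1 ≤ k.2 ∧ k.2 < k.1} where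
  toFun x := ⟨(x.1 + 1, x.2 + 1), by omega⟩
  invFun k := ⟨k.1.1 - 1, ⟨k.1.2 - 1, by omega⟩⟩
  left_inv _ := rfl
  right_inv k := by ext <;> simp <;> omega

lemma hasSum_mzv2 {s t : ℕ} (hs : 2 ≤ s) (ht : 1 ≤ t) :
    HasSum (fun c : ℕ => (((c : ℝ) + 1) ^ s)⁻¹ * ∑ i ∈ range c, (((i : ℝ) + 1) ^ t)⁻¹)
      (mzv2 s t) := by
  have h := (sigmaFinEquivLtPair.hasSum_iff.2 (summable_mzv2_term hs ht).hasSum).sigma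
    fun c => hasSum_fintype _
  refine h.congr_fun fun c => ?_
  simp only [Function.comp_apply, sigmaFinEquivLtPair, Equiv.coe_fn_mk, mul_sum]
  push_cast
  simp only [mul_inv]
  exact (Fin.sum_univ_eq_sum_range (fun i => ((c + 1 : ℝ) ^ s)⁻¹ * ((i + 1 : ℝ) ^ t)⁻¹) c).symm

lemma sum_range_mul_sum_range {R : Type*} [CommSemiring R] (f g : ℕ → R) (N : ℕ) :
    (∑ c ∈ range N, f c) * ∑ c ∈ range N, g c =
      ∑ c ∈ range N, (f c * ∑ i ∈ range c, g i + g c * ∑ i ∈ range c, f i + f c * g c) := by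
  induction N with
  | zero => simp
  | succ N ih => simp only [sum_range_succ, ← ih]; ring

theorem tsum_mul_tsum_eq_add_add {R : Type*} [CommSemiring R] [TopologicalSpace R]
    [IsTopologicalSemiring R] [T2Space R] {f g : ℕ → R} (hf : Summable f) (hg : Summable g)
    (h₁ : Summable fun c => f c * ∑ i ∈ range c, g i)
    (h₂ : Summable fun c => g c * ∑ i ∈ range c, f i) (h₃ : Summable fun c => f c * g c) :
    (∑' c, f c) * ∑' c, g c =
      ∑' c, f c * ∑ i ∈ range c, g i + ∑' c, g c * ∑ i ∈ range c, f i + ∑' c, f c * g c := by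
  rw [← h₁.tsum_add h₂, ← (h₁.add h₂).tsum_add h₃]
  refine tendsto_nhds_unique ?_ ((h₁.add h₂).add h₃).hasSum.tendsto_sum_nat
  simp only [← sum_range_mul_sum_range]
  exact hf.hasSum.tendsto_sum_nat.mul hg.hasSum.tendsto_sum_nat

theorem zetaR_mul_zetaR {p q : ℕ} (hp : 2 ≤ p) (hq : 2 ≤ q) :
    zetaR p * zetaR q = mzv2 p q + mzv2 q p + zetaR (p + q) := by
  have hpq : HasSum (fun k : ℕ => (((k : ℝ) + 1) ^ p)⁻¹ * (((k : ℝ) + 1) ^ q)⁻¹)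
      (zetaR (p + q)) := by
    simpa only [← mul_inv, ← pow_add] using hasSum_zetaR (by omega : 2 ≤ p + q)
  rw [← (hasSum_zetaR hp).tsum_eq, ← (hasSum_zetaR hq).tsum_eq,
    ← (hasSum_mzv2 hp (by omega)).tsum_eq, ← (hasSum_mzv2 hq (by omega)).tsum_eq, ← hpq.tsum_eq]
  exact tsum_mul_tsum_eq_add_add (hasSum_zetaR hp).summable (hasSum_zetaR hq).summable
    (hasSum_mzv2 hp (by omega)).summable (hasSum_mzv2 hq (by omega)).summable hpq.summable

lemma tornheim_zero_eq_zetaR_mul {p q : ℕ} (hp : 2 ≤ p) (hq : 2 ≤ q) :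
    tornheim p q 0 = zetaR p * zetaR q := by
  rw [← (hasSum_zetaR hp).tsum_eq, ← (hasSum_zetaR hq).tsum_eq, tsum_mul_tsum_of_summable_norm
    (by simpa only [Real.norm_eq_abs] using (hasSum_zetaR hp).summable.abs)
    (by simpa only [Real.norm_eq_abs] using (hasSum_zetaR hq).summable.abs)]
  exact tsum_congr fun x => by simp only [tornheimTerm, pow_zero, mul_one, mul_inv]

lemma hasSum_sub_of_antitone {f : ℕ → ℝ} (hf : Antitone f) (h0 : Tendsto f atTop (𝓝 0)) (k : ℕ) :
    HasSum (fun n => f n - f (n + k)) (∑ i ∈ range k, f i) := by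
  rw [hasSum_iff_tendsto_nat_of_nonneg fun n => sub_nonneg.2 (hf (Nat.le_add_right n k))]
  have hpartial : ∀ N, ∑ n ∈ range N, (f n - f (n + k)) =
      ∑ i ∈ range k, f i - ∑ i ∈ range k, f (N + i) := by
    intro N
    rw [sum_sub_distrib, sum_congr rfl fun n _ => congrArg f (add_comm n k)]
    linarith [sum_range_add f N k, add_comm k N ▸ sum_range_add f k N]
  simp only [hpartial]
  simpa using (tendsto_const_nhds (x := ∑ i ∈ range k, f i)).sub
    (tendsto_finsetSum (range k) fun i _ => h0.comp (tendsto_add_atTop_nat i))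

lemma hasSum_inv_sub_inv (k : ℕ) :
    HasSum (fun n : ℕ => ((n : ℝ) + 1)⁻¹ - ((n : ℝ) + k + 1)⁻¹)
      (∑ i ∈ range k, ((i : ℝ) + 1)⁻¹) := by
  have hanti : Antitone fun n : ℕ => ((n : ℝ) + 1)⁻¹ := fun m n h => by dsimp only; gcongr
  have h0 : Tendsto (fun n : ℕ => ((n : ℝ) + 1)⁻¹) atTop (𝓝 0) := by
    simpa only [one_div] using tendsto_one_div_add_atTop_nhds_zero_nat (𝕜 := ℝ)
  simpa only [Nat.cast_add] using hasSum_sub_of_antitone hanti h0 k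

lemma tornheim_one_one {q : ℕ} (hq : 1 ≤ q) : tornheim 1 q 1 = mzv2 (q + 1) 1 + zetaR (q + 2) := by
  have hinner : ∀ b : ℕ, HasSum (fun a => tornheimTerm q 1 1 (b, a))
      ((((b : ℝ) + 1) ^ (q + 1))⁻¹ * ∑ i ∈ range b, (((i : ℝ) + 1) ^ 1)⁻¹ +
        (((b : ℝ) + 1) ^ (q + 2))⁻¹) := by
    intro b
    have hb : (0 : ℝ) < (b : ℝ) + 1 := by positivity
    -- partial fractions: `1 / (a (a + b)) = (1 / a - 1 / (a + b)) / b`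
    have hterm : (fun a => tornheimTerm q 1 1 (b, a)) = fun a : ℕ =>
        (((b : ℝ) + 1) ^ (q + 1))⁻¹ * (((a : ℝ) + 1)⁻¹ - ((a : ℝ) + ((b + 1 : ℕ) : ℝ) + 1)⁻¹) := by
      ext a
      have : (0 : ℝ) < (a : ℝ) + 1 := by positivity
      simp only [tornheimTerm]
      push_cast
      field_simp
      ring
    have hsum : (((b : ℝ) + 1) ^ (q + 1))⁻¹ * ∑ i ∈ range b, (((i : ℝ) + 1) ^ 1)⁻¹ +
        (((b : ℝ) + 1) ^ (q + 2))⁻¹ =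
        (((b : ℝ) + 1) ^ (q + 1))⁻¹ * ∑ i ∈ range (b + 1), ((i : ℝ) + 1)⁻¹ := by
      rw [sum_range_succ, mul_add, pow_succ _ (q + 1), mul_inv]
      simp only [pow_one]
    rw [hterm, hsum]
    exact (hasSum_inv_sub_inv (b + 1)).mul_left _
  rw [tornheim_comm, tornheim,
    (summable_tornheimTerm le_rfl (by omega) le_rfl (by omega)).tsum_prod,
    ← ((hasSum_mzv2 (by omega) le_rfl).add (hasSum_zetaR (by omega))).tsum_eq]
  exact tsum_congr fun b => (hinner b).tsum_eq

noncomputable def tornheimExpansion (a b r : ℕ) : ℝ :=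
  ∑ j ∈ range (a + b + 1), ((j.choose a : ℝ) + j.choose b) * mzv2 (r + 1 + j) (a + b + 1 - j)

lemma tornheimExpansion_comm (a b r : ℕ) : tornheimExpansion a b r = tornheimExpansion b a r := by
  simp only [tornheimExpansion, add_comm a b, add_comm (Nat.choose _ a : ℝ)]

lemma tornheimExpansion_succ_succ (a b r : ℕ) :
    tornheimExpansion (a + 1) (b + 1) r =
      tornheimExpansion a (b + 1) (r + 1) + tornheimExpansion (a + 1) b (r + 1) := by
  simp only [tornheimExpansion]
  rw [show a + 1 + (b + 1) + 1 = a + (b + 1) + 1 + 1 by omega, sum_range_succ',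
    show a + 1 + b + 1 = a + (b + 1) + 1 by omega, ← sum_add_distrib]
  simp only [Nat.choose_zero_succ, Nat.cast_zero, add_zero, zero_mul]
  refine sum_congr rfl fun j _ => ?_
  rw [show r + 1 + (j + 1) = r + 1 + 1 + j by omega,
    show a + (b + 1) + 1 + 1 - (j + 1) = a + (b + 1) + 1 - j by omega,
    Nat.choose_succ_succ', Nat.choose_succ_succ']
  push_cast
  ring

lemma tornheimExpansion_zero_succ (b r : ℕ) :
    tornheimExpansion 0 (b + 1) r = mzv2 (r + 1) (b + 2) + tornheimExpansion 0 b (r + 1) := by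
  simp only [tornheimExpansion]
  rw [show 0 + (b + 1) + 1 = 0 + b + 1 + 1 by omega, sum_range_succ',
    add_comm (mzv2 (r + 1) (b + 2))]
  congr 1
  · refine sum_congr rfl fun j hj => ?_
    rw [show r + 1 + (j + 1) = r + 1 + 1 + j by omega,
      show 0 + b + 1 + 1 - (j + 1) = 0 + b + 1 - j by omega, Nat.choose_succ_succ',
      Nat.choose_eq_zero_of_lt (by simpa using hj : j < b + 1)]
    simp
  · simp

lemma tornheim_one_eq_tornheimExpansion (b : ℕ) {r : ℕ} (hr : 1 ≤ r) :
    tornheim 1 (b + 1) r = tornheimExpansion 0 b r := by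
  induction b generalizing r with
  | zero =>
    rw [tornheim_succ_succ (p := 0) (q := 0) (by omega) (by omega), tornheim_zero_left,
      tornheim_zero_right]
    simp [tornheimExpansion]
    ring
  | succ b ih =>
    rw [tornheim_succ_succ (p := 0) (by omega) (by omega), tornheim_zero_left, ih (by omega),
      tornheimExpansion_zero_succ]

theorem tornheim_eq_tornheimExpansion {a b r : ℕ} (ha : 1 ≤ a + r) (hb : 1 ≤ b + r) :
    tornheim (a + 1) (b + 1) r = tornheimExpansion a b r := by
  induction a generalizing b r with
  | zero => exact tornheim_one_eq_tornheimExpansion b (by omega)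
  | succ a iha =>
    induction b generalizing r with
    | zero =>
      rw [tornheim_comm, tornheimExpansion_comm]
      exact tornheim_one_eq_tornheimExpansion (a + 1) (by omega)
    | succ b ihb =>
      rw [tornheim_succ_succ (by omega) (by omega), iha (by omega) (by omega),
        ihb (by omega) (by omega), tornheimExpansion_succ_succ]

lemma sum_range_choose_succ_mul (b c : ℕ) (f : ℕ → ℝ) :
    ∑ j ∈ range (b + c), ((j + 1).choose (b + 1) : ℝ) * f j =
      ∑ i ∈ range c, ((b + 1 + i).choose (b + 1) : ℝ) * f (b + i) := by
  rw [sum_range_add, sum_eq_zero fun j hj => by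
    rw [Nat.choose_eq_zero_of_lt (by simpa using hj : j + 1 < b + 1), Nat.cast_zero, zero_mul],
    zero_add]
  exact sum_congr rfl fun i _ => by rw [add_right_comm b 1 i]

lemma tornheimExpansion_zero_eq_sum {a b : ℕ} (ha : 1 ≤ a) (hb : 1 ≤ b) :
    tornheimExpansion a b 0 =
      ∑ j ∈ range (a + b),
        (((j + 1).choose a : ℝ) + (j + 1).choose b) * mzv2 (j + 2) (a + b - j) := by
  rw [tornheimExpansion, sum_range_succ', Nat.choose_eq_zero_of_lt ha, Nat.choose_eq_zero_of_lt hb]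
  simp only [Nat.cast_zero, add_zero, zero_mul]
  exact sum_congr rfl fun j _ => by rw [show 0 + 1 + (j + 1) = j + 2 by omega,
    show a + b + 1 - (j + 1) = a + b - j by omega]

theorem sum_range_mzv2_eq_zetaR {q : ℕ} (hq : 1 ≤ q) :
    ∑ j ∈ range q, mzv2 (j + 2) (q - j) = zetaR (q + 2) := by
  obtain ⟨b, rfl⟩ : ∃ b, q = b + 1 := ⟨q - 1, by omega⟩
  have h := (tornheim_one_eq_tornheimExpansion b le_rfl).symm.trans (tornheim_one_one hq)
  simp only [tornheimExpansion, zero_add, Nat.choose_zero_right, Nat.cast_one, add_mul, one_mul,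
    sum_add_distrib] at h
  have htail : ∑ j ∈ range (b + 1), (j.choose b : ℝ) * mzv2 (1 + 1 + j) (b + 1 - j) =
      mzv2 (b + 1 + 1) 1 := by
    rw [sum_range_succ, sum_eq_zero fun j hj => by
      rw [Nat.choose_eq_zero_of_lt (by simpa using hj), Nat.cast_zero, zero_mul]]
    simp [add_comm 2 b]
  have hshift : ∑ j ∈ range (b + 1), mzv2 (j + 2) (b + 1 - j) =
      ∑ j ∈ range (b + 1), mzv2 (1 + 1 + j) (b + 1 - j) :=
    sum_congr rfl fun j _ => by congr 1; omega
  linarith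

lemma tornheim_two_zero (m : ℕ) :
    tornheim 2 (m + 3) 0 = ∑ j ∈ range (m + 3), ((j : ℝ) + 1) * mzv2 (j + 2) (m + 3 - j)
      + mzv2 (m + 3) 2 + (m + 3) * mzv2 (m + 4) 1 := by
  have htail : ∑ j ∈ range (m + 3), ((j + 1).choose (m + 2) : ℝ) * mzv2 (j + 2) (m + 3 - j) =
      mzv2 (m + 3) 2 + (m + 3) * mzv2 (m + 4) 1 := by
    rw [show m + 3 = m + 1 + 2 from rfl, sum_range_choose_succ_mul, sum_range_succ _ 1,
      sum_range_one]
    simp only [add_zero, Nat.choose_self, Nat.choose_succ_self_right, Nat.add_sub_add_left,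
      Nat.add_sub_cancel_left]
    push_cast
    ring_nf
  rw [tornheim_eq_tornheimExpansion (a := 1) (b := m + 2) (by omega) (by omega),
    tornheimExpansion_zero_eq_sum le_rfl (by omega), show 1 + (m + 2) = m + 3 by omega]
  simp only [Nat.choose_one_right, Nat.cast_add, Nat.cast_one, add_mul, sum_add_distrib, htail]
  ring

lemma tornheim_three_zero (m : ℕ) :
    tornheim 3 (m + 2) 0 = ∑ j ∈ range (m + 3), ((j + 1).choose 2 : ℝ) * mzv2 (j + 2) (m + 3 - j)
      + mzv2 (m + 2) 3 + (m + 2) * mzv2 (m + 3) 2 + (m + 3) * (m + 2) / 2 * mzv2 (m + 4) 1 := by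
  have htail : ∑ j ∈ range (m + 3), ((j + 1).choose (m + 1) : ℝ) * mzv2 (j + 2) (m + 3 - j) =
      mzv2 (m + 2) 3 + (m + 2) * mzv2 (m + 3) 2 + (m + 3) * (m + 2) / 2 * mzv2 (m + 4) 1 := by
    rw [sum_range_choose_succ_mul, sum_range_succ _ 2, sum_range_succ _ 1, sum_range_one,
      Nat.choose_symm_add (a := m + 1) (b := 2), Nat.cast_choose_two]
    simp only [add_zero, Nat.choose_self, Nat.choose_succ_self_right, Nat.add_sub_add_left,
      Nat.add_sub_cancel_left]
    push_cast
    ring_nf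
  rw [tornheim_eq_tornheimExpansion (a := 2) (b := m + 1) (by omega) (by omega),
    tornheimExpansion_zero_eq_sum (by omega) (by omega), show 2 + (m + 1) = m + 3 by omega]
  simp only [add_mul, sum_add_distrib, htail]
  ring

theorem mzv2_three_one : mzv2 3 1 = zetaR 4 / 4 := by
  have hE := sum_range_mzv2_eq_zetaR (q := 2) (by norm_num)
  have hT : tornheim 2 2 0 = zetaR 2 * zetaR 2 := tornheim_zero_eq_zetaR_mul le_rfl le_rfl
  rw [tornheim_eq_tornheimExpansion (a := 1) (b := 1) (by omega) (by omega),
    tornheimExpansion_zero_eq_sum le_rfl le_rfl, zetaR_mul_zetaR le_rfl le_rfl] at hT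
  norm_num [sum_range_succ] at hE hT
  linarith

theorem mzv2_two_two : mzv2 2 2 = 3 * zetaR 4 / 4 := by
  have hE := sum_range_mzv2_eq_zetaR (q := 2) (by norm_num)
  norm_num [sum_range_succ, mzv2_three_one] at hE
  linarith

lemma sum_range_sq_mul_mzv2 (m : ℕ) :
    ∑ j ∈ range (m + 3), ((j : ℝ) + 2) ^ 2 * mzv2 (j + 2) (m + 3 - j) =
      3 * mzv2 2 (m + 3) + 2 * mzv2 3 (m + 2) + 6 * zetaR (m + 5)
        - (2 * m + 4) * mzv2 (m + 3) 2 - (m + 5) * (m + 3) * mzv2 (m + 4) 1 := by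
  have hE : ∑ j ∈ range (m + 3), mzv2 (j + 2) (m + 3 - j) = zetaR (m + 5) :=
    sum_range_mzv2_eq_zetaR (by omega)
  have hT₂ := tornheim_two_zero m
  have hT₃ := tornheim_three_zero m
  rw [tornheim_zero_eq_zetaR_mul le_rfl (by omega), zetaR_mul_zetaR le_rfl (by omega),
    show 2 + (m + 3) = m + 5 by omega] at hT₂
  rw [tornheim_zero_eq_zetaR_mul (by norm_num) (by omega), zetaR_mul_zetaR (by norm_num) (by omega),
    show 3 + (m + 2) = m + 5 by omega] at hT₃
  -- `(j + 2)² = 2 C(j + 1, 2) + 3 (j + 1) + 1`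
  have hsplit : ∑ j ∈ range (m + 3), ((j : ℝ) + 2) ^ 2 * mzv2 (j + 2) (m + 3 - j) =
      2 * ∑ j ∈ range (m + 3), ((j + 1).choose 2 : ℝ) * mzv2 (j + 2) (m + 3 - j)
        + 3 * ∑ j ∈ range (m + 3), ((j : ℝ) + 1) * mzv2 (j + 2) (m + 3 - j)
        + ∑ j ∈ range (m + 3), mzv2 (j + 2) (m + 3 - j) := by
    simp only [mul_sum, ← sum_add_distrib]
    exact sum_congr rfl fun j _ => by rw [Nat.cast_choose_two]; push_cast; ring
  rw [hsplit]
  linear_combination hE - 2 * hT₃ - 3 * hT₂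

/-- For every integer `n ≥ 4`,
`∑_{k=2}^{n-1} k² ζ(k, n-k)
  = 3 ζ(2, n-2) + 2 ζ(3, n-3) + 6 ζ(n) - (2n-6) ζ(n-2, 2) - n(n-2) ζ(n-1, 1)`. -/
theorem weighted_sum_k_sq (n : ℕ) (hn : 4 ≤ n) :
    ∑ k ∈ Finset.Icc 2 (n - 1), (k : ℝ) ^ 2 * mzv2 k (n - k)
      = 3 * mzv2 2 (n - 2) + 2 * mzv2 3 (n - 3) + 6 * zetaR n
        - (2 * (n : ℝ) - 6) * mzv2 (n - 2) 2
        - (n : ℝ) * ((n : ℝ) - 2) * mzv2 (n - 1) 1 := by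
  obtain ⟨m, rfl⟩ : ∃ m, n = m + 4 := ⟨n - 4, by omega⟩
  have hreindex : ∑ k ∈ Icc 2 (m + 4 - 1), (k : ℝ) ^ 2 * mzv2 k (m + 4 - k) =
      ∑ j ∈ range (m + 2), ((j : ℝ) + 2) ^ 2 * mzv2 (j + 2) (m + 2 - j) := by
    rw [← Ico_add_one_right_eq_Icc, sum_Ico_eq_sum_range, show m + 4 - 1 + 1 - 2 = m + 2 by omega]
    refine sum_congr rfl fun j _ => ?_
    rw [add_comm 2 j, show m + 4 - (j + 2) = m + 2 - j by omega]
    push_cast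
    ring
  rw [hreindex]
  rcases m with _ | m
  · norm_num [sum_range_succ, mzv2_two_two, mzv2_three_one]
    ring
  · rw [show m + 1 + 2 = m + 3 by omega, sum_range_sq_mul_mzv2, show m + 1 + 4 - 2 = m + 3 by omega,
      show m + 1 + 4 - 3 = m + 2 by omega, show m + 1 + 4 - 1 = m + 4 by omega,
      show m + 1 + 4 = m + 5 by omega]
    push_cast
    ring
end
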